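/- In a flow network with vector-valued capacities c(e) ∈ (ℤ ∪ {∞})^n ordered lexicographically and vector-valued flows satisfying 0 ⪯ f(e) ⪯ c(e) and flow conservation at internal vertices, if a flow f admits no augmenting path in the residual graph, then f is a maximum flow (i.e., val(f) is lexicographically maximum among all feasible flows). -/

import Mathlib

/-- A feasible vector-valued flow in a vb-network: flows are lexicographically
non-negative, bounded by the (possibly infinite) capacities, and conserved at all
internal vertices. -/
def VbFeasible {V : Type*} [Fintype V] {n : ℕ} (s t : V)
    (c : V → V → WithTop (Lex (Fin n → ℤ))) (f : V → V → Fin n → ℤ) : Prop :=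
  (∀ u v : V, (0 : Lex (Fin n → ℤ)) ≤ toLex (f u v) ∧
      ((toLex (f u v) : Lex (Fin n → ℤ)) : WithTop (Lex (Fin n → ℤ))) ≤ c u v) ∧
  (∀ v : V, v ≠ s → v ≠ t → ∑ u, f u v = ∑ u, f v u)

/-- The value of a flow: the net flow out of the source. -/
def vbVal {V : Type*} [Fintype V] {n : ℕ} (s : V) (f : V → V → Fin n → ℤ) :
    Fin n → ℤ :=
  (∑ v, f s v) - ∑ v, f v s

/-- The residual graph: a forward edge where flow is strictly below capacity, or a
backward edge where the reverse flow is lexicographically positive. -/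
def VbResidual {V : Type*} {n : ℕ} (c : V → V → WithTop (Lex (Fin n → ℤ)))
    (f : V → V → Fin n → ℤ) (u v : V) : Prop :=
  ((toLex (f u v) : Lex (Fin n → ℤ)) : WithTop (Lex (Fin n → ℤ))) < c u v ∨
    (0 : Lex (Fin n → ℤ)) < toLex (f v u)

/-!
Let `S` be the set of vertices reachable from `s` in the residual graph of `f`; it contains `s`
but not `t`. By conservation, the value of any feasible flow is its net flow across the cut
`(S, Sᶜ)`. No residual edge leaves `S`, so `f` saturates every edge from `S` to `Sᶜ` and carries
nothing on the edges back; any other feasible flow therefore crosses every edge of the cut with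
at most the net flow of `f`. The lexicographic order on `ℤⁿ` is a linearly ordered group, so these
edge-wise comparisons add up.
-/

open Finset

theorem sum_netOutflow_eq_sum_cut {V M : Type*} [Fintype V] [DecidableEq V] [AddCommGroup M]
    (S : Finset V) (g : V → V → M) :
    ∑ v ∈ S, (∑ w, g v w - ∑ w, g w v) = ∑ v ∈ S, ∑ w ∈ Sᶜ, (g v w - g w v) := by
  have hinside : ∑ v ∈ S, ∑ w ∈ S, (g v w - g w v) = 0 := by
    simp only [sum_sub_distrib]
    rw [sum_comm, sub_self]
  simp only [← sum_add_sum_compl S (g _), ← sum_add_sum_compl S (fun w => g w _),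
    add_sub_add_comm, ← sum_sub_distrib, sum_add_distrib, hinside, zero_add]

theorem vbVal_eq_sum_cut {V : Type*} [Fintype V] [DecidableEq V] {n : ℕ} {s t : V}
    {g : V → V → Fin n → ℤ} (S : Finset V)
    (hcons : ∀ v : V, v ≠ s → v ≠ t → ∑ u, g u v = ∑ u, g v u) (hs : s ∈ S) (ht : t ∉ S) :
    vbVal s g = ∑ v ∈ S, ∑ w ∈ Sᶜ, (g v w - g w v) := by
  rw [← sum_netOutflow_eq_sum_cut, sum_eq_single_of_mem s hs]
  · rfl
  · intro v hv hvs
    rw [hcons v hvs (ne_of_mem_of_not_mem hv ht), sub_self]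

theorem sub_le_sub_of_not_residual {α : Type*} [AddCommGroup α] [LinearOrder α]
    [IsOrderedAddMonoid α] {c : WithTop α} {a b a' b' : α}
    (h : ¬ ((a : WithTop α) < c ∨ 0 < b)) (ha' : (a' : WithTop α) ≤ c) (hb' : 0 ≤ b') :
    a' - b' ≤ a - b := by
  push Not at h
  exact sub_le_sub (WithTop.coe_le_coe.1 (ha'.trans h.1)) (h.2.trans hb')

theorem stmt_14_general {V : Type*} [Fintype V] {n : ℕ}
    (s t : V)
    (c : V → V → WithTop (Lex (Fin n → ℤ)))
    (f : V → V → Fin n → ℤ) (hf : VbFeasible s t c f)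
    (hnoaug : ¬ Relation.ReflTransGen (VbResidual c f) s t) :
    ∀ f' : V → V → Fin n → ℤ, VbFeasible s t c f' →
      (∀ u v : V, ∑ i, |f' u v i| ≤ 2 * (n : ℤ)) →
      toLex (vbVal s f') ≤ toLex (vbVal s f) := by
  classical
  intro f' hf' _
  set S : Finset V := {v | Relation.ReflTransGen (VbResidual c f) s v}
  have hs : s ∈ S := mem_filter.2 ⟨mem_univ s, .refl⟩
  have ht : t ∉ S := by simpa [S] using hnoaug
  have hcut : ∀ v ∈ S, ∀ w ∈ Sᶜ, ¬ VbResidual c f v w := fun v hv w hw hvw =>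
    mem_compl.1 hw (mem_filter.2 ⟨mem_univ w, (mem_filter.1 hv).2.tail hvw⟩)
  rw [vbVal_eq_sum_cut S hf'.2 hs ht, vbVal_eq_sum_cut S hf.2 hs ht]
  -- `toLex` is the identity, so both sides are already sums in `Lex (Fin n → ℤ)`.
  exact sum_le_sum (N := Lex (Fin n → ℤ)) fun v hv => sum_le_sum fun w hw =>
    sub_le_sub_of_not_residual (hcut v hv w hw) (hf'.1 v w).2 (hf'.1 w v).1

/-- If a feasible vector-valued flow admits no augmenting path (no `s`–`t` path in the
residual graph), then it is a maximum flow: its value is lexicographically maximum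
among all feasible flows. -/
theorem stmt_14 {V : Type*} [Fintype V] [DecidableEq V] {n : ℕ}
    (s t : V) (hst : s ≠ t)
    (c : V → V → WithTop (Lex (Fin n → ℤ)))
    (f : V → V → Fin n → ℤ) (hf : VbFeasible s t c f)
    (hbound : ∀ u v : V, ∑ i, |f u v i| ≤ 2 * (n : ℤ))
    (hnoaug : ¬ Relation.ReflTransGen (VbResidual c f) s t) :
    ∀ f' : V → V → Fin n → ℤ, VbFeasible s t c f' →
      (∀ u v : V, ∑ i, |f' u v i| ≤ 2 * (n : ℤ)) →
      toLex (vbVal s f') ≤ toLex (vbVal s f) :=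
  stmt_14_general s t c f hf hnoaug
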